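/- For all integers n ≥ k ≥ 0 and r ≥ 0, the noncommutative partial r-Bell polynomial B^r_{n+r,k+r} ∈ A equals the sum, over all bicolored set partitions π ∈ S^r_{n+r,k+r}, of the ordered product x_{|B_1|} x_{|B_2|} ⋯ x_{|B_{k+r}|}, where B_1, …, B_{k+r} are the blocks of π listed in increasing order of their minimal elements, and where x_{|B_i|} = a_{|B_i|} if B_i is colored 1 and x_{|B_i|} = b_{|B_i|} if B_i is colored 2. -/

import Mathlib

/-!
Let `S(N, k)` be the sum of the ordered block products over the bicolored partitions of
`{0, …, N-1}` with `k` blocks of color 2. A partition of `{0, …, N}` arises from a unique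
partition of `{0, …, N-1}` in one of two ways: either `{N}` is added as a new block of color 2,
which appends the factor `b₁` to the ordered product, or `N` is inserted into an existing block
`B`, which keeps the order of the blocks and turns the factor `x_{|B|}` into
`x_{|B|+1} = D x_{|B|}`. By the Leibniz rule the insertions sum to `D S(N, k)`, so
`S(N+1, k+1) = S(N, k) b₁ + D S(N, k+1)` and `S(N+1, 0) = D S(N, 0)`; in the latter case every
block contains one of the first `r` elements, so `{N}` is not a block. The coefficients of
`Eⁿ(a₁^r)` satisfy the same recursion, and both start from `a₁^r`, the product for the partition
of `{0, …, r-1}` into singletons of color 1.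
-/

/-- coefficientwise extension of a map on coefficients to `A[t]` (i.e. `D` with `D t = 0`) -/
noncomputable def polyLift {A : Type*} [Semiring A] (D : A → A) (p : Polynomial A) : Polynomial A :=
  p.sum fun i c => Polynomial.C (D c) * Polynomial.X ^ i

/-- the map `E : A[t] → A[t]`, `E(p) = p·(t b_1) + D(p)` -/
noncomputable def EOpNC {A : Type*} [Ring A] (D : A → A) (b1 : A) (p : Polynomial A) : Polynomial A :=
  p * (Polynomial.C b1 * Polynomial.X) + polyLift D p

/-- the noncommutative partial `r`-Bell polynomial `B^r_{n+r,k+r}`: the coefficient of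
`t^k` in `E^n(a_1^r)` -/
noncomputable def rBellNC {A : Type*} [Ring A] (D : A → A) (a1 b1 : A) (n k r : ℕ) : A :=
  ((EOpNC D b1)^[n] (Polynomial.C (a1 ^ r))).coeff k

/-- `IsBSP N k r π` : `π` is a bicolored set partition of `{0,…,N-1}` (representing
`{1,…,N}`) into `k + r` pairwise disjoint nonempty blocks, each block carrying a color
(`true` = color 1, `false` = color 2), such that the blocks colored 1 are exactly the
blocks containing one of the first `r` elements and the first `r` elements lie in `r`
distinct blocks (so exactly `r` blocks are colored 1 and `k` blocks are colored 2).
For `N = n + r` this is membership in `S^r_{n+r,k+r}`. -/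
def IsBSP (N k r : ℕ) (π : Finset (Finset (Fin N) × Bool)) : Prop :=
  π.card = k + r ∧
  (∀ p ∈ π, p.1.Nonempty) ∧
  (∀ p ∈ π, ∀ q ∈ π, p ≠ q → Disjoint p.1 q.1) ∧
  (∀ x : Fin N, ∃ p ∈ π, x ∈ p.1) ∧
  (∀ p ∈ π, (p.2 = true ↔ ∃ i ∈ p.1, (i : ℕ) < r)) ∧
  (∀ p ∈ π, ∀ i ∈ p.1, ∀ j ∈ p.1, (i : ℕ) < r → (j : ℕ) < r → i = j)

set_option synthInstance.maxSize 2000 in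
instance (N k r : ℕ) : DecidablePred (IsBSP N k r) := fun π => by
  unfold IsBSP; infer_instance

/-- The ordered product `x_{|B_1|} ⋯ x_{|B_{k+r}|}` over the blocks of `π` listed in
increasing order of their minimal elements: we run through `i = 0,…,N-1` in increasing
order, and when `i` is the minimal element of a block `B` of `π` we pick up the factor
`a_{|B|}` (if `B` is colored 1) or `b_{|B|}` (if `B` is colored 2), and otherwise
the factor `1`. -/
noncomputable def orderedBlockProd {A : Type*} [Ring A] (a b : ℕ → A) {N : ℕ}
    (π : Finset (Finset (Fin N) × Bool)) : A :=
  ((List.finRange N).map (fun i =>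
    if h : ∃ p ∈ π, i ∈ p.1 ∧ ∀ j ∈ p.1, i ≤ j then
      (if h.choose.2 then a h.choose.1.card else b h.choose.1.card)
    else 1)).prod

section Polynomial

open Polynomial

lemma coeff_polyLift {A : Type*} [Semiring A] (D : A → A) (h0 : D 0 = 0) (p : A[X]) (k : ℕ) :
    (polyLift D p).coeff k = D (p.coeff k) := by
  rw [polyLift, Polynomial.sum_def, finsetSum_coeff]
  simp only [coeff_C_mul_X_pow, Finset.sum_ite_eq]
  split_ifs with hk
  · rfl
  · rw [notMem_support_iff.1 hk, h0]

variable {A : Type*} [Ring A]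

lemma coeff_EOpNC_zero (D : A → A) (h0 : D 0 = 0) (b1 : A) (p : A[X]) :
    (EOpNC D b1 p).coeff 0 = D (p.coeff 0) := by
  rw [EOpNC, coeff_add, coeff_polyLift D h0, ← mul_assoc, coeff_mul_X_zero, zero_add]

lemma coeff_EOpNC_succ (D : A → A) (h0 : D 0 = 0) (b1 : A) (p : A[X]) (k : ℕ) :
    (EOpNC D b1 p).coeff (k + 1) = p.coeff k * b1 + D (p.coeff (k + 1)) := by
  rw [EOpNC, coeff_add, coeff_polyLift D h0, ← mul_assoc, coeff_mul_X, coeff_mul_C]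

end Polynomial

lemma leibniz_list_prod_ofFn {A : Type*} [Ring A] (D : A → A)
    (hD : ∀ x y, D (x * y) = D x * y + x * D y) :
    ∀ {M : ℕ} (f : Fin M → A),
      D (List.ofFn f).prod = ∑ x, (List.ofFn (Function.update f x (D (f x)))).prod
  | 0, f => by simpa using hD 1 1
  | M + 1, f => by
    rw [List.ofFn_succ, List.prod_cons, hD, leibniz_list_prod_ofFn D hD, Fin.sum_univ_succ,
      Finset.mul_sum]
    congr 1
    · simp [List.ofFn_succ]
    · refine Finset.sum_congr rfl fun z _ => ?_
      rw [List.ofFn_succ, List.prod_cons, Function.update_of_ne (Fin.succ_ne_zero z).symm]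
      congr 3
      funext i
      simp [Function.update_apply]

namespace BicoloredPartition

open Finset

variable {N r : ℕ}

abbrev Block (N : ℕ) := Finset (Fin N) × Bool

def liftBlock (q : Block N) : Block (N + 1) := (q.1.map Fin.castSuccEmb, q.2)

def extendBlock (q : Block N) : Block (N + 1) :=
  (insert (Fin.last N) (q.1.map Fin.castSuccEmb), q.2)

def restrictBlock (q : Block (N + 1)) : Block N := (univ.filter (·.castSucc ∈ q.1), q.2)

@[simp] lemma mem_restrictBlock {q : Block (N + 1)} {i : Fin N} :
    i ∈ (restrictBlock q).1 ↔ i.castSucc ∈ q.1 := by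
  simp [restrictBlock]

@[simp] lemma restrictBlock_liftBlock (q : Block N) : restrictBlock (liftBlock q) = q := by
  ext i <;> simp [restrictBlock, liftBlock]

@[simp] lemma restrictBlock_extendBlock (q : Block N) : restrictBlock (extendBlock q) = q := by
  ext i <;> simp [extendBlock, restrictBlock, Fin.castSucc_ne_last]

lemma liftBlock_injective : Function.Injective (liftBlock (N := N)) :=
  Function.LeftInverse.injective restrictBlock_liftBlock

@[simp] lemma liftBlock_inj {p q : Block N} : liftBlock p = liftBlock q ↔ p = q :=
  liftBlock_injective.eq_iff

lemma last_notMem_liftBlock (q : Block N) : Fin.last N ∉ (liftBlock q).1 := by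
  simp [liftBlock, Fin.castSucc_ne_last]

lemma last_mem_extendBlock (q : Block N) : Fin.last N ∈ (extendBlock q).1 :=
  mem_insert_self _ _

lemma card_extendBlock (q : Block N) : (extendBlock q).1.card = q.1.card + 1 := by
  simp [extendBlock, card_insert_of_notMem, Fin.castSucc_ne_last]

lemma liftBlock_restrictBlock {q : Block (N + 1)} (h : Fin.last N ∉ q.1) :
    liftBlock (restrictBlock q) = q := by
  refine Prod.ext ?_ rfl
  ext i
  cases i using Fin.lastCases <;> simp [liftBlock, Fin.castSucc_ne_last, *]

lemma extendBlock_restrictBlock {q : Block (N + 1)} (h : Fin.last N ∈ q.1) :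
    extendBlock (restrictBlock q) = q := by
  refine Prod.ext ?_ rfl
  ext i
  cases i using Fin.lastCases <;> simp [extendBlock, Fin.castSucc_ne_last, *]

lemma nonempty_restrictBlock {q : Block (N + 1)} (hq : q.1.Nonempty) (h : Fin.last N ∉ q.1) :
    (restrictBlock q).1.Nonempty := by
  obtain ⟨x, hx⟩ := hq
  induction x using Fin.lastCases with
  | last => exact absurd hx h
  | cast y => exact ⟨y, mem_restrictBlock.2 hx⟩

lemma disjoint_liftBlock_iff {p q : Block N} :
    Disjoint (liftBlock p).1 (liftBlock q).1 ↔ Disjoint p.1 q.1 :=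
  disjoint_map _

lemma isLeast_restrictBlock_iff {q : Block (N + 1)} {i : Fin N} :
    IsLeast ((restrictBlock q).1 : Set (Fin N)) i ↔
      IsLeast (q.1 : Set (Fin (N + 1))) i.castSucc := by
  simp [IsLeast, lowerBounds, Fin.forall_fin_succ', (Fin.castSucc_lt_last i).le]

def IsColored (r : ℕ) (q : Block N) : Prop :=
  (q.2 = true ↔ ∃ i ∈ q.1, (i : ℕ) < r) ∧
    ∀ i ∈ q.1, ∀ j ∈ q.1, (i : ℕ) < r → (j : ℕ) < r → i = j

lemma isColored_restrictBlock_iff (hr : r ≤ N) {q : Block (N + 1)} :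
    IsColored r (restrictBlock q) ↔ IsColored r q := by
  have hN : ¬ N < r := by omega
  simp [IsColored, Fin.exists_fin_succ', Fin.forall_fin_succ', hN, restrictBlock]

structure IsBicolored (N r : ℕ) (π : Finset (Block N)) : Prop where
  nonempty : ∀ p ∈ π, p.1.Nonempty
  disjoint : ∀ p ∈ π, ∀ q ∈ π, p ≠ q → Disjoint p.1 q.1
  cover : ∀ x : Fin N, ∃ p ∈ π, x ∈ p.1
  colored : ∀ p ∈ π, IsColored r p

lemma isBSP_iff {k : ℕ} {π : Finset (Block N)} :
    IsBSP N k r π ↔ π.card = k + r ∧ IsBicolored N r π :=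
  ⟨fun ⟨hc, hn, hd, hcov, h5, h6⟩ =>
      ⟨hc, hn, hd, hcov, fun p hp => ⟨h5 p hp, h6 p hp⟩⟩,
    fun ⟨hc, hn, hd, hcov, hcol⟩ =>
      ⟨hc, hn, hd, hcov, fun p hp => (hcol p hp).1, fun p hp => (hcol p hp).2⟩⟩

lemma mem_filter_isBSP {k : ℕ} {π : Finset (Block N)} :
    π ∈ univ.filter (IsBSP N k r) ↔ π.card = k + r ∧ IsBicolored N r π :=
  (mem_filter_univ _).trans isBSP_iff

namespace IsBicolored

variable {π : Finset (Block N)}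

lemma eq_of_mem (h : IsBicolored N r π) {p q : Block N} (hp : p ∈ π) (hq : q ∈ π) {x : Fin N}
    (hxp : x ∈ p.1) (hxq : x ∈ q.1) : p = q :=
  by_contra fun hpq => disjoint_left.1 (h.disjoint p hp q hq hpq) hxp hxq

end IsBicolored

def lastSingleton (N : ℕ) : Block (N + 1) := ({Fin.last N}, false)

def addSingleton (π : Finset (Block N)) : Finset (Block (N + 1)) :=
  insert (lastSingleton N) (π.image liftBlock)

def insertLast (π : Finset (Block N)) (p : Block N) : Finset (Block (N + 1)) :=
  insert (extendBlock p) ((π.erase p).image liftBlock)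

def restrict (π : Finset (Block (N + 1))) : Finset (Block N) :=
  (π.image restrictBlock).filter (·.1.Nonempty)

lemma mem_restrict {π : Finset (Block (N + 1))} {p : Block N} :
    p ∈ restrict π ↔ p.1.Nonempty ∧ ∃ q ∈ π, restrictBlock q = p := by
  rw [restrict, mem_filter, mem_image, and_comm]

lemma last_mem_lastSingleton : Fin.last N ∈ (lastSingleton N).1 := mem_singleton_self _

lemma restrictBlock_lastSingleton : restrictBlock (lastSingleton N) = (∅, false) := by
  ext i <;> simp [lastSingleton, restrictBlock, Fin.castSucc_ne_last]

lemma disjoint_lastSingleton_liftBlock (q : Block N) :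
    Disjoint (lastSingleton N).1 (liftBlock q).1 :=
  disjoint_singleton_left.2 (last_notMem_liftBlock q)

lemma lastSingleton_notMem_image_liftBlock (π : Finset (Block N)) :
    lastSingleton N ∉ π.image liftBlock := fun h => by
  obtain ⟨q, -, hq⟩ := mem_image.1 h
  exact last_notMem_liftBlock q (hq ▸ last_mem_lastSingleton)

lemma extendBlock_notMem_image_liftBlock (π : Finset (Block N)) (p : Block N) :
    extendBlock p ∉ π.image liftBlock := fun h => by
  obtain ⟨q, -, hq⟩ := mem_image.1 h
  exact last_notMem_liftBlock q (hq ▸ last_mem_extendBlock p)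

lemma card_addSingleton (π : Finset (Block N)) : (addSingleton π).card = π.card + 1 := by
  rw [addSingleton, card_insert_of_notMem (lastSingleton_notMem_image_liftBlock π),
    card_image_of_injective _ liftBlock_injective]

lemma card_insertLast {π : Finset (Block N)} {p : Block N} (hp : p ∈ π) :
    (insertLast π p).card = π.card := by
  rw [insertLast, card_insert_of_notMem (extendBlock_notMem_image_liftBlock _ p),
    card_image_of_injective _ liftBlock_injective, card_erase_add_one hp]

lemma restrict_addSingleton {π : Finset (Block N)} (hne : ∀ p ∈ π, p.1.Nonempty) :
    restrict (addSingleton π) = π := by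
  rw [restrict, addSingleton, image_insert, image_image,
    show restrictBlock ∘ liftBlock = id from funext restrictBlock_liftBlock, image_id,
    filter_insert, restrictBlock_lastSingleton, if_neg Finset.not_nonempty_empty,
    filter_true_of_mem hne]

lemma restrict_insertLast {π : Finset (Block N)} (hne : ∀ p ∈ π, p.1.Nonempty) {p : Block N}
    (hp : p ∈ π) : restrict (insertLast π p) = π := by
  rw [restrict, insertLast, image_insert, image_image, restrictBlock_extendBlock,
    show restrictBlock ∘ liftBlock = id from funext restrictBlock_liftBlock, image_id,
    insert_erase hp, filter_true_of_mem hne]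

lemma lastSingleton_notMem_insertLast (π : Finset (Block N)) {p : Block N}
    (hp : p.1.Nonempty) : lastSingleton N ∉ insertLast π p := by
  rw [insertLast, mem_insert, not_or]
  refine ⟨fun h => ?_, lastSingleton_notMem_image_liftBlock _⟩
  have := congrArg (·.1) (congrArg restrictBlock h)
  simp only [restrictBlock_lastSingleton, restrictBlock_extendBlock] at this
  exact hp.ne_empty this.symm

lemma eq_extendBlock_of_mem_insertLast {π : Finset (Block N)} {p : Block N}
    {q : Block (N + 1)} (hq : q ∈ insertLast π p) (hl : Fin.last N ∈ q.1) :
    q = extendBlock p := by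
  rcases mem_insert.1 hq with rfl | hq
  · rfl
  · obtain ⟨q₀, -, rfl⟩ := mem_image.1 hq
    exact absurd hl (last_notMem_liftBlock q₀)

namespace IsBicolored

variable {π : Finset (Block N)}

lemma addSingleton (h : IsBicolored N r π) (hr : r ≤ N) :
    IsBicolored (N + 1) r (addSingleton π) where
  nonempty := by
    simp only [BicoloredPartition.addSingleton, forall_mem_insert, forall_mem_image]
    exact ⟨singleton_nonempty _, fun q hq => (h.nonempty q hq).map⟩
  disjoint := by
    simp only [BicoloredPartition.addSingleton, forall_mem_insert, forall_mem_image, ne_eq,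
      liftBlock_inj, not_true_eq_false, false_imp_iff, true_and]
    exact ⟨fun q _ _ => disjoint_lastSingleton_liftBlock q,
      fun p hp => ⟨fun _ => (disjoint_lastSingleton_liftBlock p).symm,
        fun q hq hpq => disjoint_liftBlock_iff.2 (h.disjoint p hp q hq hpq)⟩⟩
  cover x := by
    induction x using Fin.lastCases with
    | last => exact ⟨_, mem_insert_self _ _, last_mem_lastSingleton⟩
    | cast y =>
      obtain ⟨q, hq, hy⟩ := h.cover y
      exact ⟨liftBlock q, mem_insert_of_mem (mem_image_of_mem _ hq), by simpa [liftBlock]⟩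
  colored := by
    simp only [BicoloredPartition.addSingleton, forall_mem_insert, forall_mem_image,
      ← isColored_restrictBlock_iff hr, restrictBlock_lastSingleton, restrictBlock_liftBlock]
    exact ⟨by simp [IsColored], h.colored⟩

lemma insertLast (h : IsBicolored N r π) (hr : r ≤ N) {p : Block N} (hp : p ∈ π) :
    IsBicolored (N + 1) r (insertLast π p) where
  nonempty := by
    simp only [BicoloredPartition.insertLast, forall_mem_insert, forall_mem_image]
    exact ⟨⟨_, last_mem_extendBlock p⟩,
      fun q hq => (h.nonempty q (mem_of_mem_erase hq)).map⟩
  disjoint := by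
    have hext : ∀ q ∈ π.erase p, Disjoint (extendBlock p).1 (liftBlock q).1 := fun q hq =>
      disjoint_insert_left.2 ⟨last_notMem_liftBlock q, disjoint_liftBlock_iff.2
        (h.disjoint p hp q (mem_of_mem_erase hq) (ne_of_mem_erase hq).symm)⟩
    simp only [BicoloredPartition.insertLast, forall_mem_insert, forall_mem_image, ne_eq,
      liftBlock_inj, not_true_eq_false, false_imp_iff, true_and]
    exact ⟨fun q hq _ => hext q hq, fun q hq => ⟨fun _ => (hext q hq).symm,
      fun q' hq' hqq' => disjoint_liftBlock_iff.2
        (h.disjoint q (mem_of_mem_erase hq) q' (mem_of_mem_erase hq') hqq')⟩⟩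
  cover x := by
    induction x using Fin.lastCases with
    | last => exact ⟨_, mem_insert_self _ _, last_mem_extendBlock p⟩
    | cast y =>
      obtain ⟨q, hq, hy⟩ := h.cover y
      by_cases hqp : q = p
      · exact ⟨extendBlock p, mem_insert_self _ _, by simp_all [extendBlock]⟩
      · exact ⟨liftBlock q, mem_insert_of_mem (mem_image_of_mem _ (mem_erase.2 ⟨hqp, hq⟩)),
          by simpa [liftBlock]⟩
  colored := by
    simp only [BicoloredPartition.insertLast, forall_mem_insert, forall_mem_image,
      ← isColored_restrictBlock_iff hr, restrictBlock_extendBlock, restrictBlock_liftBlock]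
    exact ⟨h.colored p hp, fun q hq => h.colored q (mem_of_mem_erase hq)⟩

lemma restrict {π : Finset (Block (N + 1))} (h : IsBicolored (N + 1) r π) (hr : r ≤ N) :
    IsBicolored N r (restrict π) where
  nonempty p hp := (mem_restrict.1 hp).1
  disjoint p hp q hq hpq := by
    obtain ⟨-, p', hp', rfl⟩ := mem_restrict.1 hp
    obtain ⟨-, q', hq', rfl⟩ := mem_restrict.1 hq
    have := h.disjoint p' hp' q' hq' (by rintro rfl; exact hpq rfl)
    exact disjoint_left.2 fun y hy hy' =>
      disjoint_left.1 this (mem_restrictBlock.1 hy) (mem_restrictBlock.1 hy')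
  cover y := by
    obtain ⟨q, hq, hy⟩ := h.cover y.castSucc
    exact ⟨restrictBlock q, mem_restrict.2 ⟨⟨y, mem_restrictBlock.2 hy⟩, q, hq, rfl⟩,
      mem_restrictBlock.2 hy⟩
  colored p hp := by
    obtain ⟨-, q, hq, rfl⟩ := mem_restrict.1 hp
    exact (isColored_restrictBlock_iff hr).2 (h.colored q hq)

end IsBicolored

section Reconstruction

variable {π : Finset (Block (N + 1))}

lemma restrictBlock_mem_restrict (h : IsBicolored (N + 1) r π) {q : Block (N + 1)} (hq : q ∈ π)
    (hl : Fin.last N ∉ q.1) : restrictBlock q ∈ restrict π :=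
  mem_restrict.2 ⟨nonempty_restrictBlock (h.nonempty q hq) hl, q, hq, rfl⟩

lemma addSingleton_restrict (h : IsBicolored (N + 1) r π) (hs : lastSingleton N ∈ π) :
    addSingleton (restrict π) = π := by
  have hlast : ∀ q ∈ π, q ≠ lastSingleton N → Fin.last N ∉ q.1 := fun q hq hne hl =>
    hne (h.eq_of_mem hq hs hl last_mem_lastSingleton)
  ext q
  simp only [addSingleton, mem_insert, mem_image]
  constructor
  · rintro (rfl | ⟨p, hp, rfl⟩)
    · exact hs
    · obtain ⟨hne, q, hq, rfl⟩ := mem_restrict.1 hp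
      have hqs : q ≠ lastSingleton N := by
        rintro rfl
        simp [restrictBlock_lastSingleton] at hne
      rwa [liftBlock_restrictBlock (hlast q hq hqs)]
  · intro hq
    by_cases hqs : q = lastSingleton N
    · exact Or.inl hqs
    · exact Or.inr ⟨restrictBlock q, restrictBlock_mem_restrict h hq (hlast q hq hqs),
        liftBlock_restrictBlock (hlast q hq hqs)⟩

lemma insertLast_restrict (h : IsBicolored (N + 1) r π) {q : Block (N + 1)} (hq : q ∈ π)
    (hl : Fin.last N ∈ q.1) : insertLast (restrict π) (restrictBlock q) = π := by
  have hlast : ∀ q' ∈ π, q' ≠ q → Fin.last N ∉ q'.1 := fun q' hq' hne hl' =>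
    hne (h.eq_of_mem hq' hq hl' hl)
  ext q'
  simp only [insertLast, mem_insert, mem_image, mem_erase]
  constructor
  · rintro (rfl | ⟨p, ⟨hpq, hp⟩, rfl⟩)
    · rwa [extendBlock_restrictBlock hl]
    · obtain ⟨-, q', hq', rfl⟩ := mem_restrict.1 hp
      have hq'q : q' ≠ q := by rintro rfl; exact hpq rfl
      rwa [liftBlock_restrictBlock (hlast q' hq' hq'q)]
  · intro hq'
    by_cases hq'q : q' = q
    · exact Or.inl (hq'q ▸ (extendBlock_restrictBlock hl).symm)
    · have hl' := hlast q' hq' hq'q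
      have hmem := restrictBlock_mem_restrict h hq' hl'
      refine Or.inr ⟨restrictBlock q', ⟨fun he => hq'q ?_, hmem⟩, liftBlock_restrictBlock hl'⟩
      obtain ⟨y, hy⟩ := nonempty_restrictBlock (h.nonempty q' hq') hl'
      exact h.eq_of_mem hq' hq (mem_restrictBlock.1 hy) (mem_restrictBlock.1 (he ▸ hy))

lemma nonempty_restrictBlock_of_last_mem (h : IsBicolored (N + 1) r π) (hr : r ≤ N)
    (hs : lastSingleton N ∉ π) {q : Block (N + 1)} (hq : q ∈ π) (hl : Fin.last N ∈ q.1) :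
    (restrictBlock q).1.Nonempty := by
  rw [nonempty_iff_ne_empty]
  intro hempty
  have hq1 : q.1 = {Fin.last N} := by
    refine eq_singleton_iff_unique_mem.2 ⟨hl, fun x hx => ?_⟩
    induction x using Fin.lastCases with
    | last => rfl
    | cast y => exact absurd (mem_restrictBlock.2 hx) (hempty ▸ notMem_empty y)
  have hq2 : q.2 = false := by
    simpa [hq1, show ¬N < r by omega] using (h.colored q hq).1
  exact hs ((Prod.ext hq1 hq2 : q = lastSingleton N) ▸ hq)

end Reconstruction

lemma IsBicolored.le_card_filter_colorOne {π : Finset (Block N)} (h : IsBicolored N r π)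
    (hr : r ≤ N) : r ≤ #(π.filter (·.2 = true)) := by
  choose g hg hmem using h.cover
  calc r = #(univ : Finset (Fin r)) := by simp
    _ ≤ _ := card_le_card_of_injOn (fun i => g (Fin.castLE hr i)) ?_ ?_
  · exact fun i _ => mem_filter.2 ⟨hg _, (h.colored _ (hg _)).1.2 ⟨_, hmem _, i.2⟩⟩
  · intro i _ j _ (hij : g _ = g _)
    exact Fin.castLE_injective hr
      ((h.colored _ (hg _)).2 _ (hmem _) _ (hij ▸ hmem _) i.2 j.2)

lemma lastSingleton_notMem_of_isBSP_zero {π : Finset (Block (N + 1))} (h : IsBSP (N + 1) 0 r π)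
    (hr : r ≤ N + 1) : lastSingleton N ∉ π := by
  obtain ⟨hcard, h⟩ := isBSP_iff.1 h
  have hall : π.filter (·.2 = true) = π := eq_of_subset_of_card_le (filter_subset _ _)
    (hcard.trans_le (by simpa using h.le_card_filter_colorOne hr))
  intro hs
  exact Bool.false_ne_true (mem_filter.1 (hall.symm ▸ hs : lastSingleton N ∈ _)).2

section Product

variable {A : Type*} (a b : ℕ → A)

def weight (q : Block N) : A := if q.2 then a q.1.card else b q.1.card

noncomputable def blockFactor [One A] (π : Finset (Block N)) (i : Fin N) : A :=
  if h : ∃ p ∈ π, i ∈ p.1 ∧ ∀ j ∈ p.1, i ≤ j then weight a b h.choose else 1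

lemma orderedBlockProd_eq_prod_ofFn [Ring A] (π : Finset (Block N)) :
    orderedBlockProd a b π = (List.ofFn (blockFactor a b π)).prod := by
  rw [orderedBlockProd, List.ofFn_eq_map]
  rfl

variable {a b}

@[simp] lemma weight_liftBlock (q : Block N) : weight a b (liftBlock q) = weight a b q := by
  simp [weight, liftBlock]

lemma weight_extendBlock (D : A → A) (ha : ∀ i, 1 ≤ i → D (a i) = a (i + 1))
    (hb : ∀ i, 1 ≤ i → D (b i) = b (i + 1)) {q : Block N} (hq : q.1.Nonempty) :
    weight a b (extendBlock q) = D (weight a b q) := by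
  have h1 : 1 ≤ q.1.card := hq.card_pos
  simp only [weight, card_extendBlock, apply_ite D, ha _ h1, hb _ h1]
  rfl

lemma blockFactor_of_isLeast [One A] {π : Finset (Block N)}
    (hdis : ∀ p ∈ π, ∀ q ∈ π, p ≠ q → Disjoint p.1 q.1) {p : Block N} (hp : p ∈ π)
    {i : Fin N} (hi : IsLeast (p.1 : Set (Fin N)) i) :
    blockFactor a b π i = weight a b p := by
  have h : ∃ p ∈ π, i ∈ p.1 ∧ ∀ j ∈ p.1, i ≤ j := ⟨p, hp, hi.1, fun _ hj => hi.2 hj⟩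
  obtain ⟨hq, hiq, -⟩ := h.choose_spec
  rw [blockFactor, dif_pos h,
    by_contra fun hne => disjoint_left.1 (hdis _ hq _ hp hne) hiq hi.1]

lemma blockFactor_of_forall_not_isLeast [One A] {π : Finset (Block N)} {i : Fin N}
    (h : ∀ p ∈ π, ¬IsLeast (p.1 : Set (Fin N)) i) : blockFactor a b π i = 1 :=
  dif_neg fun ⟨p, hp, hi, hmin⟩ => h p hp ⟨hi, fun _ hj => hmin _ hj⟩

variable [Ring A] {π : Finset (Block N)}

lemma blockFactor_addSingleton_castSucc (h : IsBicolored N r π) (hr : r ≤ N) (i : Fin N) :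
    blockFactor a b (addSingleton π) i.castSucc = blockFactor a b π i := by
  by_cases hi : ∃ p ∈ π, IsLeast (p.1 : Set (Fin N)) i
  · obtain ⟨p, hp, hi⟩ := hi
    rw [blockFactor_of_isLeast h.disjoint hp hi, ← weight_liftBlock,
      blockFactor_of_isLeast (h.addSingleton hr).disjoint
        (mem_insert_of_mem (mem_image_of_mem _ hp))
        (by rwa [← isLeast_restrictBlock_iff, restrictBlock_liftBlock])]
  · push Not at hi
    rw [blockFactor_of_forall_not_isLeast hi, blockFactor_of_forall_not_isLeast]
    simp only [addSingleton, forall_mem_insert, forall_mem_image, ← isLeast_restrictBlock_iff,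
      restrictBlock_liftBlock, restrictBlock_lastSingleton]
    exact ⟨by simp [IsLeast], hi⟩

lemma blockFactor_addSingleton_last (h : IsBicolored N r π) (hr : r ≤ N) :
    blockFactor a b (addSingleton π) (Fin.last N) = b 1 := by
  rw [blockFactor_of_isLeast (h.addSingleton hr).disjoint (mem_insert_self _ _)
    (by simp [lastSingleton])]
  simp [weight, lastSingleton]

lemma orderedBlockProd_addSingleton (h : IsBicolored N r π) (hr : r ≤ N) :
    orderedBlockProd a b (addSingleton π) = orderedBlockProd a b π * b 1 := by
  simp only [orderedBlockProd_eq_prod_ofFn, List.ofFn_succ', List.prod_concat,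
    blockFactor_addSingleton_castSucc h hr, blockFactor_addSingleton_last h hr]

lemma blockFactor_insertLast_castSucc (h : IsBicolored N r π) (hr : r ≤ N) {p : Block N}
    (hp : p ∈ π) (i : Fin N) :
    blockFactor a b (insertLast π p) i.castSucc =
      Function.update (blockFactor a b π) (p.1.min' (h.nonempty p hp))
        (weight a b (extendBlock p)) i := by
  have hdis := (h.insertLast hr hp).disjoint
  by_cases him : i = p.1.min' (h.nonempty p hp)
  · rw [him, Function.update_self, blockFactor_of_isLeast hdis (mem_insert_self _ _)]
    rw [← isLeast_restrictBlock_iff, restrictBlock_extendBlock]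
    exact isLeast_min' _ _
  rw [Function.update_of_ne him]
  by_cases hi : ∃ q ∈ π, IsLeast (q.1 : Set (Fin N)) i
  · obtain ⟨q, hq, hi⟩ := hi
    have hqp : q ≠ p := by
      rintro rfl
      exact him (hi.unique (isLeast_min' _ _))
    rw [blockFactor_of_isLeast h.disjoint hq hi, ← weight_liftBlock,
      blockFactor_of_isLeast hdis
        (mem_insert_of_mem (mem_image_of_mem _ (mem_erase.2 ⟨hqp, hq⟩)))
        (by rwa [← isLeast_restrictBlock_iff, restrictBlock_liftBlock])]
  · push Not at hi
    rw [blockFactor_of_forall_not_isLeast hi, blockFactor_of_forall_not_isLeast]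
    simp only [insertLast, forall_mem_insert, forall_mem_image, ← isLeast_restrictBlock_iff,
      restrictBlock_liftBlock, restrictBlock_extendBlock]
    exact ⟨hi p hp, fun q hq => hi q (mem_of_mem_erase hq)⟩

lemma blockFactor_insertLast_last (h : IsBicolored N r π) {p : Block N} (hp : p ∈ π) :
    blockFactor a b (insertLast π p) (Fin.last N) = 1 := by
  apply blockFactor_of_forall_not_isLeast
  simp only [insertLast, forall_mem_insert, forall_mem_image]
  refine ⟨fun hl => ?_, fun q _ hl => last_notMem_liftBlock q hl.1⟩
  obtain ⟨y, hy⟩ := h.nonempty p hp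
  exact (Fin.castSucc_lt_last y).not_ge (hl.2 (by simpa [extendBlock] using hy))

lemma orderedBlockProd_insertLast (h : IsBicolored N r π) (hr : r ≤ N) {p : Block N}
    (hp : p ∈ π) :
    orderedBlockProd a b (insertLast π p) =
      (List.ofFn (Function.update (blockFactor a b π) (p.1.min' (h.nonempty p hp))
        (weight a b (extendBlock p)))).prod := by
  simp only [orderedBlockProd_eq_prod_ofFn, List.ofFn_succ', List.prod_concat,
    blockFactor_insertLast_castSucc h hr hp, blockFactor_insertLast_last h hp, mul_one]

lemma map_orderedBlockProd (D : A → A) (hD : ∀ x y, D (x * y) = D x * y + x * D y)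
    (ha : ∀ i, 1 ≤ i → D (a i) = a (i + 1)) (hb : ∀ i, 1 ≤ i → D (b i) = b (i + 1))
    (h : IsBicolored N r π) (hr : r ≤ N) :
    D (orderedBlockProd a b π) = ∑ p ∈ π, orderedBlockProd a b (insertLast π p) := by
  classical
  set f := blockFactor a b π
  -- only the minimum of a block carries a factor other than `1`, and `D 1 = 0`
  have hvanish : ∀ x ∈ (univ : Finset (Fin N)),
      (List.ofFn (Function.update f x (D (f x)))).prod ≠ 0 →
        ∃ p ∈ π, IsLeast (p.1 : Set (Fin N)) x := by
    intro x _ hx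
    by_contra! hno
    refine hx (List.prod_eq_zero (List.mem_ofFn.2 ⟨x, ?_⟩))
    rw [Function.update_self, show f x = 1 from blockFactor_of_forall_not_isLeast hno]
    simpa using hD 1 1
  rw [orderedBlockProd_eq_prod_ofFn, leibniz_list_prod_ofFn D hD, ← sum_filter_of_ne hvanish]
  refine (sum_bij (fun p hp => p.1.min' (h.nonempty p hp)) ?_ ?_ ?_ ?_).symm
  · exact fun p hp => mem_filter.2 ⟨mem_univ _, p, hp, isLeast_min' _ _⟩
  · exact fun p hp q hq hpq => h.eq_of_mem hp hq (min'_mem _ _) (hpq.symm ▸ min'_mem _ _)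
  · intro x hx
    obtain ⟨p, hp, hpx⟩ := (mem_filter.1 hx).2
    exact ⟨p, hp, (isLeast_min' _ _).unique hpx⟩
  · intro p hp
    rw [orderedBlockProd_insertLast h hr hp, weight_extendBlock D ha hb (h.nonempty p hp),
      show f _ = weight a b p from blockFactor_of_isLeast h.disjoint hp (isLeast_min' _ _)]

end Product

section Sums

variable {A : Type*} [Ring A] (a b : ℕ → A)
  {F : Type*} [FunLike F A A] [AddMonoidHomClass F A A]

noncomputable def partitionSum (N k r : ℕ) : A :=
  ∑ π ∈ univ.filter (IsBSP N k r), orderedBlockProd a b π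

variable {a b}

lemma sum_lastSingleton_mem (hr : r ≤ N) (k : ℕ) :
    ∑ π ∈ (univ.filter (IsBSP (N + 1) (k + 1) r)).filter (lastSingleton N ∈ ·),
      orderedBlockProd a b π = partitionSum a b N k r * b 1 := by
  rw [partitionSum, sum_mul]
  symm
  refine sum_nbij addSingleton ?_ ?_ ?_ ?_
  · intro π hπ
    obtain ⟨hcard, h⟩ := mem_filter_isBSP.1 hπ
    refine mem_filter.2 ⟨mem_filter_isBSP.2 ⟨?_, h.addSingleton hr⟩, mem_insert_self _ _⟩
    rw [card_addSingleton, hcard]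
    omega
  · intro π hπ π' hπ' he
    rw [← restrict_addSingleton (mem_filter_isBSP.1 hπ).2.nonempty, he,
      restrict_addSingleton (mem_filter_isBSP.1 hπ').2.nonempty]
  · intro π hπ
    obtain ⟨hbsp, hs⟩ := mem_filter.1 hπ
    obtain ⟨hcard, h⟩ := mem_filter_isBSP.1 hbsp
    have hrec := addSingleton_restrict h hs
    have hcard' := card_addSingleton (restrict π)
    rw [hrec, hcard] at hcard'
    exact ⟨restrict π, mem_filter_isBSP.2 ⟨by omega, h.restrict hr⟩, hrec⟩
  · exact fun π hπ => (orderedBlockProd_addSingleton (mem_filter_isBSP.1 hπ).2 hr).symm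

lemma sum_lastSingleton_notMem (D : F) (hD : ∀ x y, D (x * y) = D x * y + x * D y)
    (ha : ∀ i, 1 ≤ i → D (a i) = a (i + 1)) (hb : ∀ i, 1 ≤ i → D (b i) = b (i + 1))
    (hr : r ≤ N) (k : ℕ) :
    ∑ π ∈ (univ.filter (IsBSP (N + 1) k r)).filter (lastSingleton N ∉ ·),
      orderedBlockProd a b π = D (partitionSum a b N k r) := by
  rw [partitionSum, map_sum, sum_congr rfl fun π hπ =>
    map_orderedBlockProd D hD ha hb (mem_filter_isBSP.1 hπ).2 hr, sum_sigma']
  symm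
  refine sum_nbij (fun x => insertLast x.1 x.2) ?_ ?_ ?_ fun _ _ => rfl
  · rintro ⟨π, p⟩ hx
    obtain ⟨hπ, hp⟩ := mem_sigma.1 hx
    obtain ⟨hcard, h⟩ := mem_filter_isBSP.1 hπ
    exact mem_filter.2 ⟨mem_filter_isBSP.2 ⟨(card_insertLast hp).trans hcard,
      h.insertLast hr hp⟩, lastSingleton_notMem_insertLast π (h.nonempty p hp)⟩
  · rintro ⟨π, p⟩ hx ⟨π', p'⟩ hx' (he : insertLast π p = insertLast π' p')
    obtain ⟨hπ, hp⟩ : π ∈ _ ∧ p ∈ π := mem_sigma.1 hx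
    obtain ⟨hπ', hp'⟩ : π' ∈ _ ∧ p' ∈ π' := mem_sigma.1 hx'
    obtain rfl : π = π' := by
      rw [← restrict_insertLast (mem_filter_isBSP.1 hπ).2.nonempty hp, he,
        restrict_insertLast (mem_filter_isBSP.1 hπ').2.nonempty hp']
    have hmem : extendBlock p ∈ insertLast π p' := he ▸ mem_insert_self _ _
    have hext := eq_extendBlock_of_mem_insertLast hmem (last_mem_extendBlock p)
    rw [← restrictBlock_extendBlock p, hext, restrictBlock_extendBlock]
  · intro π hπ
    obtain ⟨hbsp, hs⟩ := mem_filter.1 hπ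
    obtain ⟨hcard, h⟩ := mem_filter_isBSP.1 hbsp
    obtain ⟨q, hq, hl⟩ := h.cover (Fin.last N)
    have hrec := insertLast_restrict h hq hl
    have hmem : restrictBlock q ∈ restrict π :=
      mem_restrict.2 ⟨nonempty_restrictBlock_of_last_mem h hr hs hq hl, q, hq, rfl⟩
    have hcard' := card_insertLast hmem
    rw [hrec, hcard] at hcard'
    exact ⟨⟨restrict π, restrictBlock q⟩,
      mem_sigma.2 ⟨mem_filter_isBSP.2 ⟨hcard'.symm, h.restrict hr⟩, hmem⟩, hrec⟩

lemma partitionSum_succ_zero (D : F) (hD : ∀ x y, D (x * y) = D x * y + x * D y)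
    (ha : ∀ i, 1 ≤ i → D (a i) = a (i + 1)) (hb : ∀ i, 1 ≤ i → D (b i) = b (i + 1))
    (hr : r ≤ N) : partitionSum a b (N + 1) 0 r = D (partitionSum a b N 0 r) := by
  rw [partitionSum, ← sum_filter_add_sum_filter_not _ (lastSingleton N ∈ ·),
    sum_lastSingleton_notMem D hD ha hb hr, filter_false_of_mem fun π hπ =>
      lastSingleton_notMem_of_isBSP_zero ((mem_filter_univ _).1 hπ) (hr.trans N.le_succ),
    sum_empty, zero_add]

lemma partitionSum_succ_succ (D : F) (hD : ∀ x y, D (x * y) = D x * y + x * D y)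
    (ha : ∀ i, 1 ≤ i → D (a i) = a (i + 1)) (hb : ∀ i, 1 ≤ i → D (b i) = b (i + 1))
    (hr : r ≤ N) (k : ℕ) :
    partitionSum a b (N + 1) (k + 1) r =
      partitionSum a b N k r * b 1 + D (partitionSum a b N (k + 1) r) := by
  rw [partitionSum, ← sum_filter_add_sum_filter_not _ (lastSingleton N ∈ ·),
    sum_lastSingleton_mem hr, sum_lastSingleton_notMem D hD ha hb hr]

end Sums

section Discrete

def discretePartition (r : ℕ) : Finset (Block r) := univ.image fun i => ({i}, true)

lemma IsBicolored.eq_singleton_of_mem {π : Finset (Block r)} (h : IsBicolored r r π)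
    {p : Block r} (hp : p ∈ π) {i : Fin r} (hi : i ∈ p.1) : p = ({i}, true) :=
  Prod.ext
    (eq_singleton_iff_unique_mem.2 ⟨hi, fun j hj => (h.colored p hp).2 j hj i hi j.2 i.2⟩)
    ((h.colored p hp).1.2 ⟨i, hi, i.2⟩)

lemma IsBicolored.eq_discretePartition {π : Finset (Block r)} (h : IsBicolored r r π) :
    π = discretePartition r := by
  ext q
  simp only [discretePartition, mem_image, mem_univ, true_and]
  constructor
  · intro hq
    obtain ⟨i, hi⟩ := h.nonempty q hq
    exact ⟨i, (h.eq_singleton_of_mem hq hi).symm⟩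
  · rintro ⟨i, rfl⟩
    obtain ⟨p, hp, hi⟩ := h.cover i
    exact h.eq_singleton_of_mem hp hi ▸ hp

lemma isBicolored_discretePartition (r : ℕ) : IsBicolored r r (discretePartition r) where
  nonempty := by simp [discretePartition]
  disjoint := by
    simp only [discretePartition, forall_mem_image, mem_univ, forall_const, ne_eq, Prod.mk.injEq,
      singleton_inj, and_true, disjoint_singleton]
    exact fun _ _ => id
  cover x := ⟨({x}, true), mem_image_of_mem _ (mem_univ x), mem_singleton_self x⟩
  colored := by simp [discretePartition, IsColored]

lemma isBSP_self_iff {k : ℕ} {π : Finset (Block r)} :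
    IsBSP r k r π ↔ k = 0 ∧ π = discretePartition r := by
  have hcard : (discretePartition r).card = r := by
    rw [discretePartition, card_image_of_injective _ fun i j h => by simpa using h, card_fin]
  rw [isBSP_iff]
  constructor
  · rintro ⟨hk, h⟩
    rw [h.eq_discretePartition, hcard] at hk
    exact ⟨by omega, h.eq_discretePartition⟩
  · rintro ⟨rfl, rfl⟩
    exact ⟨by rw [hcard, zero_add], isBicolored_discretePartition r⟩

variable {A : Type*} [Ring A] {a b : ℕ → A}

lemma orderedBlockProd_discretePartition (r : ℕ) :
    orderedBlockProd a b (discretePartition r) = a 1 ^ r := by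
  have hf : blockFactor a b (discretePartition r) = fun _ => a 1 := by
    funext i
    rw [blockFactor_of_isLeast (isBicolored_discretePartition r).disjoint
      (mem_image_of_mem _ (mem_univ i)) (by simp)]
    simp [weight]
  rw [orderedBlockProd_eq_prod_ofFn, hf, List.ofFn_const, List.prod_replicate]

lemma partitionSum_self (r k : ℕ) : partitionSum a b r k r = if k = 0 then a 1 ^ r else 0 := by
  rw [partitionSum, filter_congr fun π _ => isBSP_self_iff]
  split_ifs with hk <;> simp [hk, filter_eq', orderedBlockProd_discretePartition]

end Discrete

end BicoloredPartition

open BicoloredPartition in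
theorem stmt3_general {A : Type*} [Ring A] [Algebra ℚ A] (D : A →ₗ[ℚ] A)
    (hD : ∀ x y : A, D (x * y) = D x * y + x * D y)
    (a b : ℕ → A) (ha : ∀ i : ℕ, 1 ≤ i → D (a i) = a (i + 1))
    (hb : ∀ i : ℕ, 1 ≤ i → D (b i) = b (i + 1))
    (n k r : ℕ) :
    rBellNC (⇑D) (a 1) (b 1) n k r =
      ∑ π ∈ Finset.univ.filter
          (fun π : Finset (Finset (Fin (n + r)) × Bool) => IsBSP (n + r) k r π),
        orderedBlockProd a b π := by
  suffices h : ∀ m j, ((EOpNC D (b 1))^[m] (Polynomial.C (a 1 ^ r))).coeff j =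
      partitionSum a b (m + r) j r from h n k
  intro m
  induction m with
  | zero =>
    intro j
    rw [Function.iterate_zero_apply, Polynomial.coeff_C, zero_add, partitionSum_self]
  | succ m ih =>
    rintro (_ | j)
    · rw [Function.iterate_succ_apply', coeff_EOpNC_zero D (map_zero D), ih, add_right_comm,
        partitionSum_succ_zero D hD ha hb (Nat.le_add_left r m)]
    · rw [Function.iterate_succ_apply', coeff_EOpNC_succ D (map_zero D), ih, ih, add_right_comm,
        partitionSum_succ_succ D hD ha hb (Nat.le_add_left r m)]

/-- For `n ≥ k ≥ 0` and `r ≥ 0`, the noncommutative partial `r`-Bell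
polynomial `B^r_{n+r,k+r} ∈ A` is the sum, over all bicolored set partitions
`π ∈ S^r_{n+r,k+r}`, of the ordered product `x_{|B_1|} x_{|B_2|} ⋯ x_{|B_{k+r}|}`, the
blocks being listed in increasing order of their minimal elements, where `x_{|B_i|}` is
`a_{|B_i|}` if `B_i` is colored 1, and `b_{|B_i|}` if `B_i` is colored 2. -/
theorem stmt3 {A : Type*} [Ring A] [Algebra ℚ A] (D : A →ₗ[ℚ] A)
    (hD : ∀ x y : A, D (x * y) = D x * y + x * D y)
    (a b : ℕ → A) (ha : ∀ i : ℕ, 1 ≤ i → D (a i) = a (i + 1))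
    (hb : ∀ i : ℕ, 1 ≤ i → D (b i) = b (i + 1))
    (n k r : ℕ) (hkn : k ≤ n) :
    rBellNC (⇑D) (a 1) (b 1) n k r =
      ∑ π ∈ Finset.univ.filter
          (fun π : Finset (Finset (Fin (n + r)) × Bool) => IsBSP (n + r) k r π),
        orderedBlockProd a b π :=
  stmt3_general D hD a b ha hb n k r
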